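/- arXiv:1202.5945 — 2 statements merged into one kernel-verified Lean document; each statement's English description precedes it below -/
import Mathlib

section
/- Let d ≥ 1, let V ⊂ ℝ^d be a finite point set, let r > 0, and let MST^r(V) denote the graph on vertex set V whose edge set consists of those edges of a minimum spanning tree MST(V) whose Euclidean length lies in the interval (r, 2r]. Then for every point x ∈ ℝ^d, the interference at x satisfies I(x, MST^r(V)) < 2·30^d. -/
open MeasureTheory Filter
open scoped Classical

noncomputable section

/-- Points in `d`-dimensional Euclidean space. -/
abbrev Pt (d : ℕ) : Type := EuclideanSpace ℝ (Fin d)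

/-- The transmission radius of vertex `i` in the graph `G` on the points `x`:
the distance to its furthest neighbour (`0` if `i` is isolated). -/
noncomputable def rad {d n : ℕ} (x : Fin n → Pt d) (G : SimpleGraph (Fin n)) (i : Fin n) : ℝ :=
  ((Finset.univ.filter fun j => G.Adj i j).sup fun j =>
    (⟨dist (x i) (x j), dist_nonneg⟩ : NNReal) : NNReal)

/-- The interference at a point `p` caused by the graph `G` on the points `x`:
the number of balls `B(x i, rad x G i)` containing `p`. -/
noncomputable def interAt {d n : ℕ} (x : Fin n → Pt d) (G : SimpleGraph (Fin n)) (p : Pt d) : ℕ :=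
  (Finset.univ.filter fun i => dist p (x i) ≤ rad x G i).card

/-- The (maximum receiver-centric) interference of `G`:
the maximum interference at a vertex. -/
noncomputable def interG {d n : ℕ} (x : Fin n → Pt d) (G : SimpleGraph (Fin n)) : ℕ :=
  Finset.univ.sup fun i => interAt x G (x i)

/-- Total Euclidean edge length of `G` on the points `x`. -/
noncomputable def tlen {d n : ℕ} (x : Fin n → Pt d) (G : SimpleGraph (Fin n)) : ℝ :=
  ∑ e ∈ G.edgeFinset, Sym2.lift ⟨fun i j => dist (x i) (x j), fun i j => dist_comm _ _⟩ e

/-- `G` is a minimum spanning tree of the points `x`: a connected graph on the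
vertex set of minimum total Euclidean edge length. -/
def IsMST {d n : ℕ} (x : Fin n → Pt d) (G : SimpleGraph (Fin n)) : Prop :=
  G.Connected ∧ ∀ H : SimpleGraph (Fin n), H.Connected → tlen x G ≤ tlen x H

/-- The subgraph of `G` keeping only edges whose Euclidean length lies in `(r, 2r]`. -/
def lengthSub {d n : ℕ} (x : Fin n → Pt d) (G : SimpleGraph (Fin n)) (r : ℝ) :
    SimpleGraph (Fin n) where
  Adj i j := G.Adj i j ∧ dist (x i) (x j) ∈ Set.Ioc r (2 * r)
  symm := by
    constructor
    intro i j h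
    exact ⟨h.1.symm, by rw [dist_comm]; exact h.2⟩
  loopless := ⟨fun i h => G.irrefl h.1⟩

/-!
A vertex whose ball contains `p` is either isolated in the band graph, and then sits at `p`
(at most one such vertex, the points being distinct), or it is an endpoint of a band edge of
length at most `2r` whose midpoint lies within `3r` of `p`. By the cut property of minimum
spanning trees, the midpoint of an MST edge of length `ℓ` is at distance at least `ℓ / 2` from
the midpoint of any other MST edge. So the balls of radius `r / 4` around the midpoints of band
edges are disjoint, and those near `p` fit in a ball of radius `13r / 4`: there are at most
`13 ^ d` of them, and the interference is at most `2 * 13 ^ d + 1 < 2 * 30 ^ d`.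
-/

open Metric Module

theorem card_le_of_pairwise_dist_gt {ι E : Type*} [NormedAddCommGroup E] [NormedSpace ℝ E]
    [FiniteDimensional ℝ E] {s : Finset ι} {f : ι → E} {c : E} {R δ : ℝ} (hR : 0 ≤ R)
    (hδ : 0 < δ) (hf : ∀ i ∈ s, dist (f i) c ≤ R)
    (hsep : ∀ i ∈ s, ∀ j ∈ s, i ≠ j → 2 * δ < dist (f i) (f j)) :
    (s.card : ℝ) ≤ ((R + δ) / δ) ^ finrank ℝ E := by
  borelize E
  set μ : Measure E := Measure.addHaar
  have hdisj : (s : Set ι).PairwiseDisjoint fun i => closedBall (f i) δ :=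
    fun i hi j hj hij => closedBall_disjoint_closedBall (by linarith [hsep i hi j hj hij])
  have hsub : (⋃ i ∈ s, closedBall (f i) δ) ⊆ closedBall c (R + δ) :=
    Set.iUnion₂_subset fun i hi => closedBall_subset_closedBall' (by linarith [hf i hi])
  have hvol : (s.card : ℝ) * (δ ^ finrank ℝ E * μ.real (ball 0 1))
      ≤ (R + δ) ^ finrank ℝ E * μ.real (ball 0 1) := by
    calc (s.card : ℝ) * (δ ^ finrank ℝ E * μ.real (ball 0 1))
        = μ.real (⋃ i ∈ s, closedBall (f i) δ) := by
          rw [measureReal_biUnion_finset hdisj (fun _ _ => measurableSet_closedBall)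
              fun _ _ => measure_closedBall_lt_top.ne,
            Finset.sum_congr rfl fun i _ => Measure.addHaar_real_closedBall μ (f i) hδ.le,
            Finset.sum_const, nsmul_eq_mul]
      _ ≤ μ.real (closedBall c (R + δ)) := measureReal_mono hsub measure_closedBall_lt_top.ne
      _ = (R + δ) ^ finrank ℝ E * μ.real (ball 0 1) :=
          Measure.addHaar_real_closedBall μ c (by linarith)
  have hball : 0 < μ.real (ball 0 1) :=
    ENNReal.toReal_pos (measure_ball_pos μ 0 one_pos).ne' measure_ball_lt_top.ne
  rw [div_pow, le_div_iff₀ (by positivity)]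
  nlinarith

theorem two_mul_dist_midpoint_midpoint {E : Type*} [NormedAddCommGroup E] [NormedSpace ℝ E]
    (a b c d : E) : 2 * dist (midpoint ℝ a b) (midpoint ℝ c d) = ‖(a - c) + (b - d)‖ := by
  rw [dist_eq_norm, ← vsub_eq_sub, midpoint_vsub_midpoint, midpoint_eq_smul_add, norm_smul]
  norm_num
  ring

theorem dist_le_two_mul_dist_midpoint_midpoint {E : Type*} [NormedAddCommGroup E]
    [InnerProductSpace ℝ E] {a b c d : E} (hac : dist a b ≤ dist a c)
    (hbd : dist c d ≤ dist b d) :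
    dist a d ≤ 2 * dist (midpoint ℝ a b) (midpoint ℝ c d) := by
  have key : ‖(a - c) + (b - d)‖ ^ 2 = ‖a - c‖ ^ 2 + ‖a - d‖ ^ 2 + ‖b - c‖ ^ 2 + ‖b - d‖ ^ 2
      - ‖a - b‖ ^ 2 - ‖c - d‖ ^ 2 := by
    simp only [← real_inner_self_eq_norm_sq, inner_add_add_self, inner_sub_left,
      inner_sub_right]
    rw [real_inner_comm b a, real_inner_comm c a, real_inner_comm d a, real_inner_comm c b,
      real_inner_comm d b, real_inner_comm d c]
    ring
  rw [two_mul_dist_midpoint_midpoint]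
  rw [dist_eq_norm, dist_eq_norm] at hac hbd
  rw [dist_eq_norm]
  refine le_of_pow_le_pow_left₀ two_ne_zero (norm_nonneg _) ?_
  rw [key]
  nlinarith [sq_nonneg ‖b - c‖, pow_le_pow_left₀ (norm_nonneg _) hac 2,
    pow_le_pow_left₀ (norm_nonneg _) hbd 2]

namespace SimpleGraph

variable {V : Type*} {G : SimpleGraph V}

theorem Reachable.reachable_deleteEdges_or {u a : V} (b : V) (h : G.Reachable u a) :
    (G.deleteEdges {s(a, b)}).Reachable u a ∨ (G.deleteEdges {s(a, b)}).Reachable u b := by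
  rw [reachable_iff_reflTransGen] at h
  induction h using Relation.ReflTransGen.head_induction_on with
  | refl => exact .inl .rfl
  | @head u w huw _ ih =>
    by_cases he : s(u, w) = s(a, b)
    · rcases Sym2.eq_iff.1 he with ⟨rfl, -⟩ | ⟨rfl, -⟩
      · exact .inl .rfl
      · exact .inr .rfl
    · have hadj : (G.deleteEdges {s(a, b)}).Adj u w := deleteEdges_adj.2 ⟨huw, he⟩
      exact ih.imp hadj.reachable.trans hadj.reachable.trans

theorem Connected.sup_edge_deleteEdges {a b u v : V} (hG : G.Connected)
    (hu : (G.deleteEdges {s(a, b)}).Reachable u a)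
    (hv : (G.deleteEdges {s(a, b)}).Reachable v b) :
    (G.deleteEdges {s(a, b)} ⊔ edge u v).Connected := by
  set H := G.deleteEdges {s(a, b)} ⊔ edge u v
  have hle : G.deleteEdges {s(a, b)} ≤ H := le_sup_left
  have huv : H.Reachable u v := by
    by_cases h : u = v
    · exact h ▸ .rfl
    · exact Adj.reachable (Or.inr ((edge_adj u v u v).2 ⟨.inl ⟨rfl, rfl⟩, h⟩))
  have hba : H.Reachable b a := (hv.mono hle).symm.trans (huv.symm.trans (hu.mono hle))
  have hreach_a : ∀ w, H.Reachable w a := fun w =>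
    ((hG.preconnected w a).reachable_deleteEdges_or b).elim (·.mono hle)
      fun h => (h.mono hle).trans hba
  have : Nonempty V := ⟨a⟩
  exact ⟨fun w w' => (hreach_a w).trans (hreach_a w').symm⟩

theorem Connected.exists_mk_eq_forall_reachable {e f : Sym2 V} (hG : G.Connected)
    (he : e ∈ G.edgeSet) (hf : f ∈ (G.deleteEdges {e}).edgeSet) :
    ∃ a b, e = s(a, b) ∧ ∀ v ∈ f, (G.deleteEdges {e}).Reachable v b := by
  induction e using Sym2.ind with | h a b => ?_
  induction f using Sym2.ind with | h c d => ?_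
  have hcd : (G.deleteEdges {s(a, b)}).Reachable c d := Adj.reachable hf
  have hd_end : ∀ w ∈ s(c, d), (G.deleteEdges {s(a, b)}).Reachable w d := by
    intro w hw
    rcases Sym2.mem_iff.1 hw with rfl | rfl
    exacts [hcd, .rfl]
  rcases (hG.preconnected d a).reachable_deleteEdges_or b with h | h
  · exact ⟨b, a, Sym2.eq_swap, fun w hw => (hd_end w hw).trans h⟩
  · exact ⟨a, b, rfl, fun w hw => (hd_end w hw).trans h⟩

end SimpleGraph

open SimpleGraph

def edgeLength {V P : Type*} [PseudoMetricSpace P] (x : V → P) : Sym2 V → ℝ :=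
  Sym2.lift ⟨fun i j => dist (x i) (x j), fun _ _ => dist_comm _ _⟩

def edgeMidpoint {V E : Type*} [AddCommGroup E] [Module ℝ E] (x : V → E) : Sym2 V → E :=
  Sym2.lift ⟨fun i j => midpoint ℝ (x i) (x j), fun _ _ => midpoint_comm _ _⟩

theorem edgeLength_nonneg {V P : Type*} [PseudoMetricSpace P] (x : V → P) (e : Sym2 V) :
    0 ≤ edgeLength x e := by
  induction e using Sym2.ind with | h i j => exact dist_nonneg

section MinimumSpanningTree

variable {d n : ℕ} {x : Fin n → Pt d}

theorem tlen_deleteEdges_edge {G : SimpleGraph (Fin n)} {a b : Fin n} (h : G.Adj a b) :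
    tlen x (G.deleteEdges {s(a, b)}) = tlen x G - dist (x a) (x b) := by
  calc tlen x (G.deleteEdges {s(a, b)}) = ∑ e ∈ G.edgeFinset.erase s(a, b), edgeLength x e :=
        Finset.sum_congr (by ext e; simp [and_comm]) fun _ _ => rfl
    _ = tlen x G - dist (x a) (x b) := Finset.sum_erase_eq_sub (G.mem_edgeFinset.2 h)

theorem tlen_sup_edge_le (H : SimpleGraph (Fin n)) (u v : Fin n) :
    tlen x (H ⊔ edge u v) ≤ tlen x H + dist (x u) (x v) := by
  calc tlen x (H ⊔ edge u v) ≤ ∑ e ∈ insert s(u, v) H.edgeFinset, edgeLength x e := by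
        refine Finset.sum_le_sum_of_subset_of_nonneg (fun e he => ?_)
          fun e _ _ => edgeLength_nonneg x e
        have he : e ∈ H.edgeSet ∪ (edge u v).edgeSet := by simpa using he
        rcases he with he | he
        · exact Finset.mem_insert_of_mem (H.mem_edgeFinset.2 he)
        · exact Finset.mem_insert.2 (.inl (edgeSet_edge_subset he))
    _ ≤ tlen x H + dist (x u) (x v) := by
        by_cases h : s(u, v) ∈ H.edgeFinset
        · rw [Finset.insert_eq_of_mem h]
          exact le_add_of_nonneg_right dist_nonneg
        · rw [Finset.sum_insert h, add_comm]
          rfl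

theorem IsMST.dist_le_of_reachable_deleteEdges {G : SimpleGraph (Fin n)} (hG : IsMST x G)
    {a b u v : Fin n} (hab : G.Adj a b) (hu : (G.deleteEdges {s(a, b)}).Reachable u a)
    (hv : (G.deleteEdges {s(a, b)}).Reachable v b) :
    dist (x a) (x b) ≤ dist (x u) (x v) := by
  have hswap := hG.2 _ (hG.1.sup_edge_deleteEdges hu hv)
  linarith [tlen_sup_edge_le (x := x) (G.deleteEdges {s(a, b)}) u v,
    tlen_deleteEdges_edge (x := x) hab]

theorem IsMST.edgeLength_le_two_mul_dist_edgeMidpoint {G : SimpleGraph (Fin n)}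
    (hG : IsMST x G) {e₁ e₂ : Sym2 (Fin n)} (he₁ : e₁ ∈ G.edgeSet) (he₂ : e₂ ∈ G.edgeSet)
    (hne : e₁ ≠ e₂) :
    edgeLength x e₁ ≤ 2 * dist (edgeMidpoint x e₁) (edgeMidpoint x e₂) := by
  have mem_deleteEdges : ∀ {e f}, e ∈ G.edgeSet → e ≠ f → e ∈ (G.deleteEdges {f}).edgeSet :=
    fun he hef => by rw [edgeSet_deleteEdges]; exact ⟨he, hef⟩
  -- Orient `e₁ = ab` and `e₂ = dc` so that `e₂` lies on `b`'s side of the cut at `ab`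
  -- and `e₁` on `c`'s side of the cut at `dc`.
  obtain ⟨a, b, rfl, hb⟩ :=
    hG.1.exists_mk_eq_forall_reachable he₁ (mem_deleteEdges he₂ hne.symm)
  obtain ⟨d, c, rfl, hc⟩ := hG.1.exists_mk_eq_forall_reachable he₂ (mem_deleteEdges he₁ hne)
  have hab : G.Adj a b := he₁
  have hdc : G.Adj d c := he₂
  have hac := hG.dist_le_of_reachable_deleteEdges hab .rfl (hb c (Sym2.mem_mk_right d c))
  have had := hG.dist_le_of_reachable_deleteEdges hab .rfl (hb d (Sym2.mem_mk_left d c))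
  have hdb := hG.dist_le_of_reachable_deleteEdges hdc .rfl (hc b (Sym2.mem_mk_right a b))
  rw [dist_comm (x d), dist_comm (x d)] at hdb
  change dist (x a) (x b) ≤ 2 * dist (midpoint ℝ (x a) (x b)) (midpoint ℝ (x d) (x c))
  rw [midpoint_comm (x d)]
  exact had.trans (dist_le_two_mul_dist_midpoint_midpoint hac hdb)

theorem rad_eq_zero {G : SimpleGraph (Fin n)} {i : Fin n} (h : ¬∃ j, G.Adj i j) :
    rad x G i = 0 := by
  simp only [rad, not_exists.1 h, Finset.filter_false, NNReal.coe_eq_zero]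
  exact Finset.sup_empty

theorem exists_adj_rad_eq {G : SimpleGraph (Fin n)} {i : Fin n} (h : ∃ j, G.Adj i j) :
    ∃ j, G.Adj i j ∧ rad x G i = dist (x i) (x j) := by
  obtain ⟨j₀, hj₀⟩ := h
  obtain ⟨j, hj, hsup⟩ := Finset.exists_mem_eq_sup (Finset.univ.filter fun j => G.Adj i j)
    ⟨j₀, by simpa using hj₀⟩ fun j => (⟨dist (x i) (x j), dist_nonneg⟩ : NNReal)
  exact ⟨j, (Finset.mem_filter.1 hj).2, congrArg NNReal.toReal hsup⟩

theorem card_le_one_of_not_exists_adj (hx : Function.Injective x) {G : SimpleGraph (Fin n)}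
    {p : Pt d} {s : Finset (Fin n)}
    (hs : ∀ i ∈ s, dist p (x i) ≤ rad x G i ∧ ¬∃ j, G.Adj i j) :
    s.card ≤ 1 := by
  have hp : ∀ i ∈ s, x i = p := fun i hi => by
    have := (hs i hi).1
    rw [rad_eq_zero (hs i hi).2] at this
    exact (dist_le_zero.1 this).symm
  exact Finset.card_le_one.2 fun i hi j hj => hx ((hp i hi).trans (hp j hj).symm)

theorem mem_edgeSet_lengthSub {G : SimpleGraph (Fin n)} {r : ℝ} {e : Sym2 (Fin n)} :
    e ∈ (lengthSub x G r).edgeSet ↔ e ∈ G.edgeSet ∧ edgeLength x e ∈ Set.Ioc r (2 * r) := by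
  induction e using Sym2.ind with | h i j => rfl

theorem exists_mem_edgeSet_lengthSub_dist_edgeMidpoint_le {G : SimpleGraph (Fin n)} {r : ℝ}
    {p : Pt d} {i : Fin n} (hp : dist p (x i) ≤ rad x (lengthSub x G r) i)
    (hi : ∃ j, (lengthSub x G r).Adj i j) :
    ∃ e ∈ (lengthSub x G r).edgeSet, i ∈ e ∧ dist (edgeMidpoint x e) p ≤ 3 * r := by
  obtain ⟨j, hij, hrad⟩ := exists_adj_rad_eq (x := x) hi
  refine ⟨s(i, j), hij, Sym2.mem_mk_left i j, ?_⟩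
  have hlen : dist (x i) (x j) ≤ 2 * r := hij.2.2
  have hmid : dist (midpoint ℝ (x i) (x j)) (x i) = dist (x i) (x j) / 2 := by
    rw [dist_midpoint_left]
    norm_num
    ring
  calc dist (midpoint ℝ (x i) (x j)) p ≤ dist (midpoint ℝ (x i) (x j)) (x i) + dist (x i) p :=
        dist_triangle _ _ _
    _ ≤ 3 * r := by rw [hmid, dist_comm (x i) p]; linarith

theorem IsMST.card_le_of_forall_adj_lengthSub {G : SimpleGraph (Fin n)} (hG : IsMST x G)
    {r : ℝ} (hr : 0 < r) {p : Pt d} {s : Finset (Fin n)}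
    (hs : ∀ i ∈ s,
      dist p (x i) ≤ rad x (lengthSub x G r) i ∧ ∃ j, (lengthSub x G r).Adj i j) :
    s.card ≤ 2 * 13 ^ d := by
  set F := (lengthSub x G r).edgeFinset.filter fun e => dist (edgeMidpoint x e) p ≤ 3 * r
  have hF : F.card ≤ 13 ^ d := by
    have hsep : ∀ e ∈ F, ∀ e' ∈ F, e ≠ e' →
        2 * (r / 4) < dist (edgeMidpoint x e) (edgeMidpoint x e') := by
      intro e he e' he' hne
      have hband := mem_edgeSet_lengthSub.1 (mem_edgeFinset.1 (Finset.mem_filter.1 he).1)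
      have hband' := mem_edgeSet_lengthSub.1 (mem_edgeFinset.1 (Finset.mem_filter.1 he').1)
      linarith [hband.2.1, hG.edgeLength_le_two_mul_dist_edgeMidpoint hband.1 hband'.1 hne]
    have hpack := card_le_of_pairwise_dist_gt (by positivity) (by positivity)
      (fun e he => (Finset.mem_filter.1 he).2) hsep
    have h13 : (3 * r + r / 4) / (r / 4) = 13 := by field_simp; norm_num
    rw [finrank_euclideanSpace_fin, h13] at hpack
    exact_mod_cast hpack
  have hcount : s.card * 1 ≤ F.card * 2 := by
    refine Finset.card_mul_le_card_mul (fun i e => i ∈ e) (fun i hi => ?_) fun e _ => ?_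
    · obtain ⟨e, he, hie, hmid⟩ :=
        exists_mem_edgeSet_lengthSub_dist_edgeMidpoint_le (hs i hi).1 (hs i hi).2
      have heF : e ∈ F := Finset.mem_filter.2 ⟨mem_edgeFinset.2 he, hmid⟩
      exact Finset.one_le_card.2 ⟨e, (Finset.mem_bipartiteAbove _).2 ⟨heF, hie⟩⟩
    · calc (s.bipartiteBelow (fun i e => i ∈ e) e).card ≤ e.toFinset.card :=
            Finset.card_le_card fun i hi =>
              Sym2.mem_toFinset.2 ((Finset.mem_bipartiteBelow _).1 hi).2
        _ ≤ 2 := by rw [Sym2.card_toFinset]; split_ifs <;> norm_num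
  omega

end MinimumSpanningTree

/-- For any finite point set in `ℝ^d`, any `r > 0` and any minimum spanning tree, the
subgraph of edges of length in `(r, 2r]` has interference less than `2 * 30 ^ d` at
every point of `ℝ^d`. -/
theorem mst_band_interference (d n : ℕ) (hd : 1 ≤ d) (x : Fin n → Pt d)
    (hx : Function.Injective x) (G : SimpleGraph (Fin n)) (hG : IsMST x G)
    (r : ℝ) (hr : 0 < r) (p : Pt d) :
    interAt x (lengthSub x G r) p < 2 * 30 ^ d := by
  set B := lengthSub x G r
  set S := Finset.univ.filter fun i => dist p (x i) ≤ rad x B i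
  have hband : (S.filter fun i => ∃ j, B.Adj i j).card ≤ 2 * 13 ^ d :=
    hG.card_le_of_forall_adj_lengthSub hr fun i hi => by simpa [S] using hi
  have hisolated : (S.filter fun i => ¬∃ j, B.Adj i j).card ≤ 1 :=
    card_le_one_of_not_exists_adj hx fun i hi => by simpa [S] using hi
  have hsplit := Finset.card_filter_add_card_filter_not (s := S) fun i => ∃ j, B.Adj i j
  have hpow : 13 ^ d < 30 ^ d := Nat.pow_lt_pow_left (by norm_num) (by omega)
  change S.card < 2 * 30 ^ d
  omega
end
end

section
/- Let V ⊂ ℝ² be a finite point set that contains a Zeno configuration of size k (for some scale u > 0 and center x). Then I(V) ≥ √(k − 1); that is, every connected graph G on vertex set V has a vertex y ∈ V with I(y,G) ≥ √(k − 1). -/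
open MeasureTheory Filter
open scoped Classical

noncomputable section

/-- The center of the `i`-th small ball of a Zeno configuration with scale `u`
centered at `x`: the point `x + (u * 3 ^ i, 0)` for `i ≥ 1`, and `x` itself for `i = 0`. -/
noncomputable def zenoCenter (x : Pt 2) (u : ℝ) (i : ℕ) : Pt 2 :=
  if i = 0 then x else x + EuclideanSpace.single (0 : Fin 2) (u * 3 ^ i)

/-- The point family `p` contains a Zeno configuration of size `k` with scale `u > 0`
centered at `x`: there are `k` points, one in each closed ball `D i` of radius `u`
centered at `zenoCenter x u i`, and the big closed ball `D` of radius `u * 3 ^ k`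
centered at `x` contains no other points of the family. -/
def ContainsZeno {n : ℕ} (p : Fin n → Pt 2) (k : ℕ) (u : ℝ) (x : Pt 2) : Prop :=
  0 < u ∧ ∃ f : Fin k → Fin n, Function.Injective f ∧
    (∀ i : Fin k, dist (p (f i)) (zenoCenter x u (i : ℕ)) ≤ u) ∧
    (∀ j : Fin n, dist (p j) x ≤ u * 3 ^ k → ∃ i : Fin k, j = f i)

/-!
Let `q i` be the point of the configuration in the `i`-th small ball and call `w` forward if
`q w` has a neighbour other than `q 0, …, q w`. The only geometry needed is that `q i` lies within
`u` of the sphere of radius `u * 3 ^ i` about `x`, while every other point is outside the big ball: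
a forward `w` therefore has a radius of roughly `2 u 3 ^ w`, and its ball contains `q 1`. Hence
there are at most `I` forward indices, where `I` is the interference of the graph. Every other index
`j` is adjacent to some `q i` with `i < j`, and then `i` is forward. So the `k` points are covered by
the closed neighbourhoods of the forward points, each of size at most `I`, and `k ≤ I ^ 2`.
-/

open Finset Function

section Interference

variable {d n : ℕ} (x : Fin n → Pt d) (G : SimpleGraph (Fin n))

lemma rad_nonneg (i : Fin n) : 0 ≤ rad x G i := NNReal.coe_nonneg _

lemma dist_le_rad_of_adj {i j : Fin n} (h : G.Adj i j) : dist (x i) (x j) ≤ rad x G i := by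
  have := le_sup (f := fun j => (⟨dist (x i) (x j), dist_nonneg⟩ : NNReal))
    (mem_filter.mpr ⟨mem_univ j, h⟩)
  exact_mod_cast this

lemma card_le_interAt {y : Pt d} {s : Finset (Fin n)} (h : ∀ i ∈ s, dist y (x i) ≤ rad x G i) :
    #s ≤ interAt x G y :=
  card_le_card fun i hi => mem_filter.mpr ⟨mem_univ _, h i hi⟩

lemma degree_add_one_le_interAt (v : Fin n) : G.degree v + 1 ≤ interAt x G (x v) := by
  rw [← G.card_neighborFinset_eq_degree, ← card_insert_of_notMem (G.notMem_neighborFinset_self v)]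
  refine card_le_interAt x G fun i hi => ?_
  rcases mem_insert.mp hi with rfl | hi
  · simpa using rad_nonneg x G i
  · rw [dist_comm]
    exact dist_le_rad_of_adj x G ((G.mem_neighborFinset _ _).mp hi).symm

end Interference

section Forward

variable {V ι : Type*} [LinearOrder ι] (G : SimpleGraph V) (f : ι → V)

def HasForwardNeighbor (w : ι) : Prop :=
  ∃ v, G.Adj (f w) v ∧ ∀ i, f i = v → w < i

lemma exists_hasForwardNeighbor_adj (hf : Injective f) (hnbr : ∀ v, ∃ w, G.Adj v w) (j : ι) :
    ∃ w, HasForwardNeighbor G f w ∧ (f j = f w ∨ G.Adj (f w) (f j)) := by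
  by_cases hj : HasForwardNeighbor G f j
  · exact ⟨j, hj, Or.inl rfl⟩
  obtain ⟨v, hv⟩ := hnbr (f j)
  simp only [HasForwardNeighbor, not_exists, not_and, not_forall, not_lt] at hj
  obtain ⟨i, rfl, hij⟩ := hj v hv
  have hij : i < j := hij.lt_of_ne fun h => hv.ne (congrArg f h.symm)
  exact ⟨i, ⟨f j, hv.symm, fun i' hi' => hf hi' ▸ hij⟩, Or.inr hv.symm⟩

end Forward

section Annulus

variable {d n k : ℕ} {p : Fin n → Pt d} {G : SimpleGraph (Fin n)} {f : Fin k → Fin n}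
  {x : Pt d} {u : ℝ}

lemma le_dist_of_forall_lt (hu : 0 ≤ u)
    (hann : ∀ i : Fin k, |dist (p (f i)) x - u * 3 ^ (i : ℕ)| ≤ u)
    (hout : ∀ j : Fin n, dist (p j) x ≤ u * 3 ^ k → ∃ i : Fin k, j = f i)
    {m : ℕ} (hm : m < k) {v : Fin n} (hv : ∀ i : Fin k, f i = v → m < i) :
    u * 3 ^ (m + 1) - u ≤ dist (p v) x := by
  by_cases hvx : dist (p v) x ≤ u * 3 ^ k
  · obtain ⟨i, rfl⟩ := hout v hvx
    have hpow : u * 3 ^ (m + 1) ≤ u * 3 ^ (i : ℕ) := by gcongr <;> linarith [hv i rfl]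
    linarith [(abs_le.mp (hann i)).1]
  · have hpow : u * 3 ^ (m + 1) ≤ u * 3 ^ k := by gcongr <;> linarith
    linarith

lemma le_rad_of_forall_lt (hu : 0 ≤ u)
    (hann : ∀ i : Fin k, |dist (p (f i)) x - u * 3 ^ (i : ℕ)| ≤ u)
    (hout : ∀ j : Fin n, dist (p j) x ≤ u * 3 ^ k → ∃ i : Fin k, j = f i)
    {m : ℕ} (hm : m < k) {w : Fin k} {v : Fin n} (hadj : G.Adj (f w) v)
    (hv : ∀ i : Fin k, f i = v → m < i) :
    u * 3 ^ (m + 1) - u * 3 ^ (w : ℕ) - 2 * u ≤ rad p G (f w) := by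
  have hv := le_dist_of_forall_lt hu hann hout hm hv
  have hw := (abs_le.mp (hann w)).2
  calc u * 3 ^ (m + 1) - u * 3 ^ (w : ℕ) - 2 * u ≤ dist (p v) x - dist (p (f w)) x := by linarith
    _ ≤ dist (p (f w)) (p v) := by linarith [dist_triangle_left (p v) x (p (f w))]
    _ ≤ rad p G (f w) := dist_le_rad_of_adj p G hadj

lemma dist_le_rad_of_hasForwardNeighbor (hu : 0 ≤ u) (hk : 2 ≤ k)
    (hann : ∀ i : Fin k, |dist (p (f i)) x - u * 3 ^ (i : ℕ)| ≤ u)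
    (hout : ∀ j : Fin n, dist (p j) x ≤ u * 3 ^ k → ∃ i : Fin k, j = f i)
    {w : Fin k} (hw : HasForwardNeighbor G f w) :
    dist (p (f ⟨1, hk⟩)) (p (f w)) ≤ rad p G (f w) := by
  obtain ⟨v, hadj, hv⟩ := hw
  have hdist : dist (p (f ⟨1, hk⟩)) (p (f w)) ≤ 4 * u + (u * 3 ^ (w : ℕ) + u) := by
    have h1 := (abs_le.mp (hann ⟨1, hk⟩)).2
    rw [Fin.val_mk, pow_one] at h1
    linarith [dist_triangle_right (p (f ⟨1, hk⟩)) (p (f w)) x, (abs_le.mp (hann w)).2]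
  obtain ⟨_ | _ | w, hwk⟩ := w
  · by_cases hv1 : v = f ⟨1, hk⟩
    · subst hv1
      rw [dist_comm]
      exact dist_le_rad_of_adj p G hadj
    · have hrad := le_rad_of_forall_lt hu hann hout (m := 1) hk hadj fun i hi => by
        have h0 : 0 < (i : ℕ) := hv i hi
        have h1 : (i : ℕ) ≠ 1 := fun h => hv1 (hi.symm.trans (congrArg f (Fin.ext h)))
        omega
      norm_num at hrad hdist
      linarith
  · simpa using rad_nonneg p G _
  · have hrad := le_rad_of_forall_lt hu hann hout hwk hadj hv
    have h9 : (9 : ℝ) ≤ 3 ^ (w + 2) := by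
      calc (9 : ℝ) = 3 ^ 2 := by norm_num
        _ ≤ 3 ^ (w + 2) := pow_le_pow_right₀ (by norm_num) (by omega)
    simp only at hdist hrad
    rw [pow_succ] at hrad
    nlinarith

theorem card_le_sq_of_interAt_le (hu : 0 ≤ u) (hk : 2 ≤ k) (hf : Injective f)
    (hann : ∀ i : Fin k, |dist (p (f i)) x - u * 3 ^ (i : ℕ)| ≤ u)
    (hout : ∀ j : Fin n, dist (p j) x ≤ u * 3 ^ k → ∃ i : Fin k, j = f i)
    (hG : G.Connected) {t : ℕ} (ht : ∀ v, interAt p G (p v) ≤ t) : k ≤ t ^ 2 := by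
  classical
  have : Nontrivial (Fin k) := Fin.nontrivial_iff_two_le.mpr hk
  have : Nontrivial (Fin n) := hf.nontrivial
  set W := univ.filter (HasForwardNeighbor G f)
  have hW : #W ≤ t :=
    calc #W = #(W.image f) := (card_image_of_injective _ hf).symm
      _ ≤ interAt p G (p (f ⟨1, hk⟩)) := card_le_interAt p G fun i hi => by
          obtain ⟨w, hw, rfl⟩ := mem_image.mp hi
          exact dist_le_rad_of_hasForwardNeighbor hu hk hann hout (mem_filter.mp hw).2
      _ ≤ t := ht _
  have hcover : univ.image f ⊆ W.biUnion fun w => insert (f w) (G.neighborFinset (f w)) := by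
    intro v hv
    obtain ⟨j, -, rfl⟩ := mem_image.mp hv
    obtain ⟨w, hw, hjw⟩ :=
      exists_hasForwardNeighbor_adj G f hf (hG.preconnected.exists_adj_of_nontrivial) j
    simpa [W, hw] using ⟨w, hw, hjw⟩
  have hnbhd : ∀ w ∈ W, #(insert (f w) (G.neighborFinset (f w))) ≤ t := fun w _ =>
    calc #(insert (f w) (G.neighborFinset (f w))) ≤ G.degree (f w) + 1 := card_insert_le _ _
      _ ≤ t := (degree_add_one_le_interAt p G (f w)).trans (ht _)
  calc k = #(univ.image f) := by rw [card_image_of_injective _ hf, card_fin]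
    _ ≤ #W * t := (card_le_card hcover).trans (card_biUnion_le_card_mul _ _ _ hnbhd)
    _ ≤ t ^ 2 := by rw [sq]; exact Nat.mul_le_mul_right _ hW

end Annulus

lemma abs_dist_sub_le_of_dist_zenoCenter_le {x y : Pt 2} {u : ℝ} (hu : 0 ≤ u) {i : ℕ}
    (h : dist y (zenoCenter x u i) ≤ u) : |dist y x - u * 3 ^ i| ≤ u := by
  rcases eq_or_ne i 0 with rfl | hi
  · simp only [zenoCenter, if_true] at h
    rw [abs_le]
    constructor <;> linarith [dist_nonneg (x := y) (y := x)]
  · have hc : dist (zenoCenter x u i) x = u * 3 ^ i := by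
      rw [zenoCenter, if_neg hi, dist_self_add_left, PiLp.norm_single,
        Real.norm_of_nonneg (by positivity)]
    rw [← hc]
    exact (abs_dist_sub_le y _ x).trans h

theorem zeno_interference_general (n k : ℕ) (hk : 0 < k) (p : Fin n → Pt 2)
    (u : ℝ) (hu : 0 < u) (x : Pt 2)
    (f : Fin k → Fin n) (hf : Function.Injective f)
    (hin : ∀ i : Fin k, dist (p (f i)) (zenoCenter x u (i : ℕ)) ≤ u)
    (hout : ∀ j : Fin n, dist (p j) x ≤ u * 3 ^ k → ∃ i : Fin k, j = f i)
    (G : SimpleGraph (Fin n)) (hG : G.Connected) :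
    ∃ i : Fin n, Real.sqrt ((k : ℝ) - 1) ≤ (interAt p G (p i) : ℝ) := by
  obtain ⟨i₀, -, hmax⟩ := exists_max_image univ (fun i => interAt p G (p i))
    ⟨f ⟨0, hk⟩, mem_univ _⟩
  refine ⟨i₀, ?_⟩
  set t := interAt p G (p i₀)
  suffices hkt : (k : ℝ) - 1 ≤ (t : ℝ) ^ 2 by
    simpa using Real.sqrt_le_sqrt hkt
  rcases lt_or_ge k 2 with hk2 | hk2
  · have : (k : ℝ) ≤ 1 := by exact_mod_cast Nat.le_of_lt_succ hk2
    linarith [sq_nonneg (t : ℝ)]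
  · have hann i := abs_dist_sub_le_of_dist_zenoCenter_le hu.le (hin i)
    have hkt := card_le_sq_of_interAt_le hu.le hk2 hf hann hout hG fun v => hmax v (mem_univ v)
    have : (k : ℝ) ≤ (t : ℝ) ^ 2 := by exact_mod_cast hkt
    linarith

/-- If a point set in `ℝ²` contains a Zeno configuration of size `k`, then every
connected graph on the point set has a vertex with interference at least `√(k - 1)`. -/
theorem zeno_interference (n k : ℕ) (hk : 0 < k) (p : Fin n → Pt 2)
    (hp : Function.Injective p) (u : ℝ) (hu : 0 < u) (x : Pt 2)
    (f : Fin k → Fin n) (hf : Function.Injective f)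
    (hin : ∀ i : Fin k, dist (p (f i)) (zenoCenter x u (i : ℕ)) ≤ u)
    (hout : ∀ j : Fin n, dist (p j) x ≤ u * 3 ^ k → ∃ i : Fin k, j = f i)
    (G : SimpleGraph (Fin n)) (hG : G.Connected) :
    ∃ i : Fin n, Real.sqrt ((k : ℝ) - 1) ≤ (interAt p G (p i) : ℝ) :=
  zeno_interference_general n k hk p u hu x f hf hin hout G hG
end
end
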